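/- arXiv:2312.13808 — 3 statements merged into one kernel-verified Lean document; each statement's English description precedes it below -/
import Mathlib

section
/- If a is a monotone binary word of length n (all letters equal), then the equivalence class of a under the relation generated by ro and ve consists exactly of a and its negation; in particular the class has size 2. -/
/-- The cyclic-shift bijection on binary words of length `n`:
`(ro a) i = a (i + 1)`, i.e. `a_1 a_2 ⋯ a_n ↦ a_2 ⋯ a_n a_1`. -/
def roE (n : ℕ) : Equiv.Perm (Fin n → Bool) :=
  Equiv.arrowCongr (finRotate n).symm (Equiv.refl Bool)

/-- Negation as a permutation of `Bool`. -/
def notPerm : Equiv.Perm Bool :=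
  Function.Involutive.toPerm (fun b => !b) (fun b => Bool.not_not b)

/-- The reverse-and-negate bijection on binary words of length `n`:
`(ve a) i = !(a (rev i))`. -/
def veE (n : ℕ) : Equiv.Perm (Fin n → Bool) :=
  Equiv.arrowCongr Fin.revPerm notPerm

/-- `a ≡ b`: `b` is obtained from `a` by some composition of `ro` and `ve`. -/
def wordRel (n : ℕ) (a b : Fin n → Bool) : Prop :=
  ∃ g ∈ Subgroup.closure ({roE n, veE n} : Set (Equiv.Perm (Fin n → Bool))), g a = b



lemma roE_const (n : ℕ) (c : Bool) : roE n (fun _ => c) = fun _ => c := rfl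

lemma veE_const (n : ℕ) (c : Bool) : veE n (fun _ => c) = fun _ => !c := rfl

lemma closure_const (n : ℕ) (g : Equiv.Perm (Fin n → Bool))
    (hg : g ∈ Subgroup.closure ({roE n, veE n} : Set (Equiv.Perm (Fin n → Bool)))) :
    ∀ d : Bool, g (fun _ => d) = (fun _ => d) ∨ g (fun _ => d) = (fun _ => !d) := by
  induction hg using Subgroup.closure_induction with
  | mem x hx =>
    intro d
    rcases hx with h | h
    · left; rw [h]; exact roE_const n d
    · right; rw [h]; exact veE_const n d
  | one => intro d; left; rfl
  | mul x y _ _ hx hy =>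
    intro d
    rcases hy d with h | h <;> simp only [Equiv.Perm.mul_apply, h]
    · exact hx d
    · rcases hx (!d) with h' | h'
      · right; exact h'
      · left; simpa using h'
  | inv x _ hx =>
    intro d
    rcases hx d with h | h
    · left
      have := congrArg (⇑x⁻¹) h
      simpa using this.symm
    · rcases hx (!d) with h' | h'
      · have heq : (fun _ : Fin n => d) = fun _ => !d := x.injective (h.trans h'.symm)
        left
        rw [heq] at h ⊢
        have := congrArg (⇑x⁻¹) h'
        simpa using this.symm
      · right
        simp only [Bool.not_not] at h'
        have := congrArg (⇑x⁻¹) h'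
        simpa using this.symm

/-- the equivalence class of a monotone (constant) word under the
relation generated by `ro` and `ve` consists exactly of the word and its negation,
and hence has size 2. -/
theorem class_of_monotone_word (n : ℕ) (hn : 1 ≤ n) (c : Bool) :
    {b | wordRel n (fun _ => c) b} =
      ({(fun _ => c), (fun _ => !c)} : Set (Fin n → Bool)) ∧
    Set.ncard {b | wordRel n (fun _ => c) b} = 2 := by
  have hne : (fun _ : Fin n => c) ≠ (fun _ => !c) := by
    intro h
    have := congrFun h ⟨0, hn⟩
    simp at this
  have hset : {b | wordRel n (fun _ => c) b} =
      ({(fun _ => c), (fun _ => !c)} : Set (Fin n → Bool)) := by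
    ext b
    constructor
    · rintro ⟨g, hg, rfl⟩
      rcases closure_const n g hg c with h | h
      · left; exact h
      · right; exact h
    · rintro (rfl | rfl)
      · exact ⟨1, one_mem _, rfl⟩
      · exact ⟨veE n, Subgroup.subset_closure (by simp), veE_const n c⟩
  refine ⟨hset, ?_⟩
  rw [hset, Set.ncard_pair hne]
end

section
/- The proportion of binary words a of length n whose equivalence class under the dihedral action generated by the cyclic shift ro and the map ve (reversal composed with negation) has size exactly 2n tends to 1 as n → ∞; equivalently, the number of words with a nontrivial stabilizer under this action is o(2^n). -/
open Filter
open Fin.NatCast Fin.IntCast Fin.CommRing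

variable {N : ℕ}

lemma roE_apply (a : Fin (N+1) → Bool) (i : Fin (N+1)) : roE (N+1) a i = a (i + 1) := by
  simp [roE, Equiv.arrowCongr, finRotate_succ_apply]

lemma veE_apply (a : Fin (N+1) → Bool) (i : Fin (N+1)) : veE (N+1) a i = !a i.rev := by
  simp [veE, notPerm, Equiv.arrowCongr, Function.Involutive.toPerm]

lemma rev_eq (i : Fin (N+1)) : i.rev = -i - 1 := by
  have h : i.rev + (i + 1) = 0 := by
    apply Fin.ext
    simp [Fin.val_add, Fin.val_rev]
    have hv : N - i.val + (i.val + 1) = N + 1 := by omega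
    rw [hv, Nat.mod_self]
  have := eq_neg_of_add_eq_zero_left h
  rw [this]; ring

lemma roE_pow_apply (k : ℕ) (a : Fin (N+1) → Bool) (i : Fin (N+1)) :
    ((roE (N+1)) ^ k) a i = a (i + (k : Fin (N+1))) := by
  induction k generalizing a i with
  | zero => simp
  | succ m ih =>
    rw [pow_succ, Equiv.Perm.mul_apply, ih]
    rw [roE_apply]
    congr 1
    push_cast
    ring

lemma roE_pow_top : (roE (N+1)) ^ (N+1) = 1 := by
  apply Equiv.ext; intro a; funext i
  rw [roE_pow_apply]
  simp [Fin.natCast_self]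

lemma roE_pow_mod (k : ℕ) : (roE (N+1)) ^ k = (roE (N+1)) ^ (k % (N+1)) := by
  conv_lhs => rw [← Nat.mod_add_div k (N+1)]
  rw [pow_add, pow_mul, roE_pow_top, one_pow, mul_one]

lemma veE_veE (a : Fin (N+1) → Bool) : veE (N+1) (veE (N+1) a) = a := by
  funext i
  rw [veE_apply, veE_apply]
  simp

lemma natCast_mod (k : ℕ) : ((k % (N+1) : ℕ) : Fin (N+1)) = (k : Fin (N+1)) := by
  apply Fin.ext
  simp [Fin.val_natCast, Nat.mod_mod_of_dvd]

lemma veE_roE_pow (k : ℕ) (a : Fin (N+1) → Bool) :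
    veE (N+1) (((roE (N+1)) ^ k) a)
      = ((roE (N+1)) ^ ((N+1) - k % (N+1))) (veE (N+1) a) := by
  funext i
  rw [veE_apply, roE_pow_apply, roE_pow_apply, veE_apply]
  congr 1
  rw [rev_eq, rev_eq]
  have h1 : (((N+1) - k % (N+1) : ℕ) : Fin (N+1)) = -(k : Fin (N+1)) := by
    rw [Nat.cast_sub (le_of_lt (Nat.mod_lt _ (Nat.succ_pos N)))]
    rw [natCast_mod]
    simp [Fin.natCast_self]
  rw [h1]
  ring

def obMap (a : Fin (N+1) → Bool) : Fin (N+1) × Bool → (Fin (N+1) → Bool) :=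
  fun p => ((roE (N+1)) ^ (p.1 : ℕ)) (cond p.2 (veE (N+1) a) a)

def T (a : Fin (N+1) → Bool) : Set (Fin (N+1) → Bool) := Set.range (obMap a)

lemma mem_T_self (a : Fin (N+1) → Bool) : a ∈ T a := ⟨((0 : Fin (N+1)), false), by simp [obMap]⟩

lemma ro_pow_obMap (k : ℕ) (a : Fin (N+1) → Bool) (p : Fin (N+1) × Bool) :
    ((roE (N+1)) ^ k) (obMap a p) = obMap a ((((p.1 : ℕ) + k : ℕ) : Fin (N+1)), p.2) := by
  unfold obMap
  rw [← Equiv.Perm.mul_apply, ← pow_add]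
  rw [Fin.val_natCast, ← roE_pow_mod, add_comm k (p.1 : ℕ)]

lemma ve_obMap (a : Fin (N+1) → Bool) (p : Fin (N+1) × Bool) :
    veE (N+1) (obMap a p) = obMap a ((((N+1) - ((p.1:ℕ) % (N+1)) : ℕ) : Fin (N+1)), !p.2) := by
  unfold obMap
  rw [veE_roE_pow]
  have hv : (((((N+1) - ((p.1:ℕ) % (N+1)) : ℕ) : Fin (N+1))) : ℕ)
      = ((N+1) - ((p.1:ℕ) % (N+1))) % (N+1) := Fin.val_natCast _ _
  rw [hv, ← roE_pow_mod]
  cases hp : p.2 with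
  | false => simp
  | true => simp [veE_veE]

lemma roE_mapsTo (a : Fin (N+1) → Bool) : Set.MapsTo (roE (N+1)) (T a) (T a) := by
  rintro b ⟨p, rfl⟩
  have := ro_pow_obMap 1 a p
  rw [pow_one] at this
  exact ⟨_, this.symm⟩

lemma roE_pow_mapsTo (k : ℕ) (a : Fin (N+1) → Bool) :
    Set.MapsTo ((roE (N+1)) ^ k) (T a) (T a) := by
  rintro b ⟨p, rfl⟩
  exact ⟨_, (ro_pow_obMap k a p).symm⟩

lemma veE_mapsTo (a : Fin (N+1) → Bool) : Set.MapsTo (veE (N+1)) (T a) (T a) := by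
  rintro b ⟨p, rfl⟩
  exact ⟨_, (ve_obMap a p).symm⟩

lemma roE_inv : (roE (N+1))⁻¹ = (roE (N+1)) ^ N := by
  apply inv_eq_of_mul_eq_one_right
  rw [← pow_succ']
  exact roE_pow_top

lemma veE_inv : (veE (N+1))⁻¹ = veE (N+1) := by
  apply inv_eq_of_mul_eq_one_right
  apply Equiv.ext; intro a
  rw [Equiv.Perm.mul_apply, veE_veE, Equiv.Perm.one_apply]

def K (a : Fin (N+1) → Bool) : Subgroup (Equiv.Perm (Fin (N+1) → Bool)) where
  carrier := {g : Equiv.Perm (Fin (N+1) → Bool) | Set.MapsTo (⇑g) (T a) (T a) ∧ Set.MapsTo (⇑(g⁻¹)) (T a) (T a)}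
  mul_mem' := by
    rintro g h ⟨hg1, hg2⟩ ⟨hh1, hh2⟩
    constructor
    · intro b hb
      have : (g * h) b = g (h b) := Equiv.Perm.mul_apply _ _ _
      rw [this]; exact hg1 (hh1 hb)
    · intro b hb
      rw [mul_inv_rev, Equiv.Perm.mul_apply]
      exact hh2 (hg2 hb)
  one_mem' := by
    constructor <;> · intro b hb; simpa using hb
  inv_mem' := by
    rintro g ⟨h1, h2⟩
    exact ⟨h2, by rw [inv_inv]; exact h1⟩

lemma closure_le_K (a : Fin (N+1) → Bool) :
    Subgroup.closure ({roE (N+1), veE (N+1)} : Set (Equiv.Perm (Fin (N+1) → Bool))) ≤ K a := by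
  rw [Subgroup.closure_le]
  rintro g (rfl | rfl)
  · exact ⟨roE_mapsTo a, by rw [roE_inv]; exact roE_pow_mapsTo N a⟩
  · exact ⟨veE_mapsTo a, by rw [veE_inv]; exact veE_mapsTo a⟩

lemma orbit_eq_T (a : Fin (N+1) → Bool) : {b | wordRel (N+1) a b} = T a := by
  apply Set.Subset.antisymm
  · rintro b ⟨g, hg, rfl⟩
    exact (closure_le_K a hg).1 (mem_T_self a)
  · rintro b ⟨⟨x, ε⟩, rfl⟩
    refine ⟨(roE (N+1)) ^ ((x : ℕ)) * (cond ε (veE (N+1)) 1), ?_, ?_⟩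
    · apply mul_mem
      · exact pow_mem (Subgroup.subset_closure (by simp)) _
      · cases ε with
        | false => exact one_mem _
        | true => exact Subgroup.subset_closure (by simp)
    · rw [Equiv.Perm.mul_apply]
      cases ε with
      | false => simp [obMap]
      | true => simp [obMap]

lemma orbit_ncard_le (a : Fin (N+1) → Bool) : (T a).ncard ≤ 2 * (N+1) := by
  have h1 : T a = obMap a '' Set.univ := by rw [Set.image_univ]; rfl
  rw [h1]
  calc (obMap a '' Set.univ).ncard ≤ (Set.univ : Set (Fin (N+1) × Bool)).ncard :=
        Set.ncard_image_le Set.finite_univ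
    _ = 2 * (N+1) := by
        rw [Set.ncard_univ, Nat.card_eq_fintype_card]
        simp [mul_comm]

def Good (a : Fin (N+1) → Bool) : Prop :=
  (∀ k, 0 < k → k < N+1 → ((roE (N+1)) ^ k) a ≠ a) ∧
  (∀ k, k < N+1 → ((roE (N+1)) ^ k) (veE (N+1) a) ≠ a)

lemma ro_cancel {v w : ℕ} (hw : w < N+1) {x y : Fin (N+1) → Bool}
    (h : ((roE (N+1)) ^ v) x = ((roE (N+1)) ^ w) y) :
    ((roE (N+1)) ^ ((((N+1) - w) + v) % (N+1))) x = y := by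
  have h2 := congrArg (((roE (N+1)) ^ ((N+1) - w)) ·) h
  rw [← Equiv.Perm.mul_apply, ← Equiv.Perm.mul_apply, ← pow_add, ← pow_add] at h2
  have hw2 : (N+1) - w + w = N+1 := by omega
  rw [hw2, roE_pow_top, Equiv.Perm.one_apply] at h2
  rw [← roE_pow_mod]
  exact h2

lemma good_inj {a : Fin (N+1) → Bool} (h : Good a) : Function.Injective (obMap a) := by
  rintro ⟨v, ε⟩ ⟨w, δ⟩ heq
  -- helper to derive v = w from ro^m x = x statements
  have key : ∀ v w : Fin (N+1), ((((N+1) - (w:ℕ)) + (v:ℕ)) % (N+1) = 0) → v = w := by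
    intro v w h0
    have hd := Nat.dvd_of_mod_eq_zero h0
    obtain ⟨c, hc⟩ := hd
    have hv := v.isLt; have hw := w.isLt
    have hc2 : c < 2 := by
      by_contra hcon
      push_neg at hcon
      have : (N+1) * 2 ≤ (N+1) * c := Nat.mul_le_mul_left _ hcon
      omega
    interval_cases c <;> (apply Fin.ext; omega)
  cases ε <;> cases δ <;> simp only [obMap, cond] at heq
  · -- false false
    have h2 := ro_cancel w.isLt heq
    set m := (((N+1) - (w:ℕ)) + (v:ℕ)) % (N+1) with hm
    by_cases hm0 : m = 0
    · have := key v w hm0; rw [this]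
    · exact absurd h2 (h.1 m (Nat.pos_of_ne_zero hm0) (Nat.mod_lt _ (Nat.succ_pos N)))
  · -- false true : x = a, y = ve a
    have h2 := ro_cancel w.isLt heq
    exfalso
    -- ro^m a = ve a ⟹ ve (ro^m a) = a ... we need form ro^k (ve a) = a
    -- apply ve to both sides: ve (ro^m a) = ve (ve a) = a
    have h3 := congrArg (veE (N+1) ·) h2
    rw [veE_roE_pow, veE_veE, roE_pow_mod] at h3
    exact h.2 _ (Nat.mod_lt _ (Nat.succ_pos N)) h3
  · -- true false : ro^v (ve a) = ro^w a ⟹ ro^m (ve a) = a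
    have h2 := ro_cancel w.isLt heq
    exact absurd h2 (h.2 _ (Nat.mod_lt _ (Nat.succ_pos N)))
  · -- true true : ro^m (ve a) = ve a
    have h2 := ro_cancel w.isLt heq
    set m := (((N+1) - (w:ℕ)) + (v:ℕ)) % (N+1) with hm
    by_cases hm0 : m = 0
    · have := key v w hm0; rw [this]
    · exfalso
      have h3 := congrArg (veE (N+1) ·) h2
      rw [veE_roE_pow, veE_veE] at h3
      have hmlt : m < N+1 := Nat.mod_lt _ (Nat.succ_pos N)
      have hne : (N+1) - m % (N+1) < N+1 := by
        rw [Nat.mod_eq_of_lt hmlt]; omega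
      have hpos : 0 < (N+1) - m % (N+1) := by
        rw [Nat.mod_eq_of_lt hmlt]; omega
      exact h.1 _ hpos hne h3

lemma good_orbit_card {a : Fin (N+1) → Bool} (h : Good a) :
    Set.ncard {b | wordRel (N+1) a b} = 2 * (N+1) := by
  rw [orbit_eq_T]
  have h1 : T a = obMap a '' Set.univ := by rw [Set.image_univ]; rfl
  rw [h1, Set.ncard_image_of_injective _ (good_inj h), Set.ncard_univ,
    Nat.card_eq_fintype_card]
  simp [mul_comm]

open Finset in
noncomputable def Fix1 (N k : ℕ) : Finset (Fin (N+1) → Bool) :=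
  Finset.univ.filter (fun a => ((roE (N+1)) ^ k) a = a)

open Finset in
noncomputable def Fix2 (N k : ℕ) : Finset (Fin (N+1) → Bool) :=
  Finset.univ.filter (fun a => ((roE (N+1)) ^ k) (veE (N+1) a) = a)

lemma per_mul {a : Fin (N+1) → Bool} {c : Fin (N+1)}
    (hc : ∀ i, a (i + c) = a i) (u : ℕ) : ∀ i, a (i + (u : Fin (N+1)) * c) = a i := by
  induction u with
  | zero => intro i; simp
  | succ m ih =>
    intro i
    have : ((m+1 : ℕ) : Fin (N+1)) * c = (m : Fin (N+1)) * c + c := by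
      push_cast; ring
    rw [this, ← add_assoc, hc, ih]

lemma cast_N_add_one : ((N : Fin (N+1)) + 1) = 0 := by
  rw [← Nat.cast_add_one]
  exact Fin.natCast_self _

lemma fix1_det {k : ℕ} {a : Fin (N+1) → Bool} (ha : ((roE (N+1)) ^ k) a = a)
    (i : Fin (N+1)) :
    a i = a ((i.val % Nat.gcd k (N+1) : ℕ) : Fin (N+1)) := by
  set d := Nat.gcd k (N+1) with hd
  have hd0 : 0 < d := Nat.gcd_pos_of_pos_right _ (Nat.succ_pos N)
  have per : ∀ j : Fin (N+1), a (j + (k : Fin (N+1))) = a j := by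
    intro j
    have := congrFun ha j
    rwa [roE_pow_apply] at this
  have perd : ∀ j : Fin (N+1), a (j + (d : Fin (N+1))) = a j := by
    have bez := Nat.gcd_eq_gcd_ab k (N+1)
    have hdk : (d : Fin (N+1)) = (k : Fin (N+1)) * ((Nat.gcdA k (N+1) : ℤ) : Fin (N+1)) := by
      have h2 := congrArg (fun z : ℤ => (z : Fin (N+1))) bez
      push_cast at h2
      rw [cast_N_add_one] at h2
      simpa using h2
    intro j
    rw [hdk]
    set α := ((Nat.gcdA k (N+1) : ℤ) : Fin (N+1)) with hα
    have : (k : Fin (N+1)) * α = ((α.val : ℕ) : Fin (N+1)) * (k : Fin (N+1)) := by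
      rw [Fin.cast_val_eq_self, mul_comm]
    rw [this]
    exact per_mul per α.val j
  have h2 : ((i.val % d + (i.val / d) * d : ℕ) : Fin (N+1))
      = ((i.val % d : ℕ) : Fin (N+1)) + ((i.val / d : ℕ) : Fin (N+1)) * (d : Fin (N+1)) := by
    push_cast; ring
  have hsplit : i = ((i.val % d : ℕ) : Fin (N+1))
      + ((i.val / d : ℕ) : Fin (N+1)) * (d : Fin (N+1)) := by
    rw [← h2, Nat.mod_add_div', Fin.cast_val_eq_self]
  conv_lhs => rw [hsplit]
  exact per_mul perd (i.val / d) _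

lemma card_fix1 {k : ℕ} (hk0 : 0 < k) (hk : k < N+1) :
    (Fix1 N k).card ≤ 2 ^ ((N+1)/2) := by
  set d := Nat.gcd k (N+1) with hd
  have hd0 : 0 < d := Nat.gcd_pos_of_pos_right _ (Nat.succ_pos N)
  have hdvd : d ∣ N+1 := Nat.gcd_dvd_right _ _
  have hdlt : d < N+1 := lt_of_le_of_lt (Nat.gcd_le_left _ hk0) hk
  have h2d : 2 * d ≤ N+1 := by
    obtain ⟨e, he⟩ := hdvd
    have he2 : 2 ≤ e := by
      rcases e with _ | _ | e
      · omega
      · omega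
      · omega
    calc 2 * d = d * 2 := by ring
      _ ≤ d * e := Nat.mul_le_mul_left _ he2
      _ = N+1 := he.symm
  have hdle : d ≤ N+1 := le_of_lt hdlt
  have hcard : (Fix1 N k).card ≤ (Finset.univ : Finset (Fin d → Bool)).card := by
    apply Finset.card_le_card_of_injOn (fun a (j : Fin d) => a (Fin.castLE hdle j))
    · intro a _; exact Finset.mem_univ _
    · intro a ha b hb hab
      simp only [Fix1, Finset.mem_coe, Finset.mem_filter] at ha hb
      funext i
      have hr : i.val % d < d := Nat.mod_lt _ hd0
      have hkey : ((i.val % d : ℕ) : Fin (N+1)) = Fin.castLE hdle ⟨i.val % d, hr⟩ := by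
        apply Fin.ext
        simp [Fin.val_natCast, Nat.mod_eq_of_lt (lt_of_lt_of_le hr hdle)]
      calc a i = a ((i.val % d : ℕ) : Fin (N+1)) := fix1_det ha.2 i
        _ = a (Fin.castLE hdle ⟨i.val % d, hr⟩) := by rw [hkey]
        _ = b (Fin.castLE hdle ⟨i.val % d, hr⟩) := congrFun hab ⟨i.val % d, hr⟩
        _ = b ((i.val % d : ℕ) : Fin (N+1)) := by rw [hkey]
        _ = b i := (fix1_det hb.2 i).symm
  calc (Fix1 N k).card ≤ (Finset.univ : Finset (Fin d → Bool)).card := hcard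
    _ = 2 ^ d := by simp
    _ ≤ 2 ^ ((N+1)/2) := Nat.pow_le_pow_right (by norm_num) (by omega)

lemma fix2_cond {k : ℕ} {a : Fin (N+1) → Bool}
    (ha : ((roE (N+1)) ^ k) (veE (N+1) a) = a) (i : Fin (N+1)) :
    a (Fin.rev (k : Fin (N+1)) - i) = !(a i) := by
  have h1 := congrFun ha i
  rw [roE_pow_apply, veE_apply] at h1
  have h2 : Fin.rev (i + (k : Fin (N+1))) = Fin.rev (k : Fin (N+1)) - i := by
    rw [rev_eq, rev_eq]; ring
  rw [h2] at h1
  rw [← h1]; simp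

noncomputable def S2 (N : ℕ) (c : Fin (N+1)) : Finset (Fin (N+1)) :=
  Finset.univ.filter (fun i => i.val ≤ (c - i).val)

lemma zset_card (c : Fin (N+1)) :
    (Finset.univ.filter (fun x : Fin (N+1) => x + x = 0)).card ≤ 2 := by
  have hsub : (Finset.univ.filter (fun x : Fin (N+1) => x + x = 0))
      ⊆ {(0 : Fin (N+1)), (((N+1)/2 : ℕ) : Fin (N+1))} := by
    intro x hx
    rw [Finset.mem_filter] at hx
    have hv : (x.val + x.val) % (N+1) = 0 := by
      have := congrArg Fin.val hx.2
      simpa [Fin.val_add] using this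
    have hdvd := Nat.dvd_of_mod_eq_zero hv
    obtain ⟨e, he⟩ := hdvd
    have hlt := x.isLt
    have he2 : e < 2 := by
      by_contra hcon
      push_neg at hcon
      have : (N+1) * 2 ≤ (N+1) * e := Nat.mul_le_mul_left _ hcon
      omega
    simp only [Finset.mem_insert, Finset.mem_singleton]
    interval_cases e
    · left; apply Fin.ext; rw [Fin.val_zero]; omega
    · right; apply Fin.ext
      rw [Fin.val_natCast, Nat.mod_eq_of_lt (by omega)]
      omega
  calc _ ≤ ({(0 : Fin (N+1)), (((N+1)/2 : ℕ) : Fin (N+1))} : Finset _).card :=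
        Finset.card_le_card hsub
    _ ≤ 2 := Finset.card_insert_le _ _ |>.trans (by simp)

lemma fx_card (c : Fin (N+1)) :
    (Finset.univ.filter (fun i : Fin (N+1) => c - i = i)).card ≤ 2 := by
  set Fx := Finset.univ.filter (fun i : Fin (N+1) => c - i = i) with hFx
  rcases Finset.eq_empty_or_nonempty Fx with he | ⟨i0, hi0⟩
  · rw [he]; simp
  · have hi0' : c - i0 = i0 := (Finset.mem_filter.mp hi0).2
    have : Fx.card ≤ (Finset.univ.filter (fun x : Fin (N+1) => x + x = 0)).card := by
      apply Finset.card_le_card_of_injOn (fun i => i - i0)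
      · intro i hi
        rw [Finset.mem_coe, Finset.mem_filter] at hi ⊢
        refine ⟨Finset.mem_univ _, ?_⟩
        have h1 : c - i = i := hi.2
        have h2 : c = i + i := sub_eq_iff_eq_add.mp h1
        have h3 : c = i0 + i0 := sub_eq_iff_eq_add.mp hi0'
        have h4 : (i - i0) + (i - i0) = (i + i) - (i0 + i0) := by ring
        rw [h4, ← h2, ← h3, sub_self]
      · intro x hx y hy hxy
        exact sub_left_injective hxy
    exact this.trans (zset_card c)

lemma card_S2 (c : Fin (N+1)) : 2 * (S2 N c).card ≤ N + 3 := by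
  classical
  set E := Finset.univ.filter (fun i : Fin (N+1) => i.val < (c - i).val) with hE
  set E' := Finset.univ.filter (fun i : Fin (N+1) => ¬ i.val ≤ (c - i).val) with hE'
  set Fx := Finset.univ.filter (fun i : Fin (N+1) => c - i = i) with hFx
  have hcompl : (S2 N c).card + E'.card = N + 1 := by
    have := Finset.card_filter_add_card_filter_not
      (s := (Finset.univ : Finset (Fin (N+1)))) (p := fun i => i.val ≤ (c - i).val)
    simpa [S2, hE'] using this
  have hEE' : E.card = E'.card := by
    apply Finset.card_nbij (fun i => c - i)
    · intro i hi
      rw [hE, Finset.mem_coe, Finset.mem_filter] at hi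
      rw [hE', Finset.mem_coe, Finset.mem_filter]
      refine ⟨Finset.mem_univ _, ?_⟩
      have : c - (c - i) = i := by ring
      beta_reduce
      rw [this]
      omega
    · intro x _ y _ hxy
      exact sub_right_injective hxy
    · intro j hj
      rw [hE', Finset.coe_filter] at hj
      simp only [Set.mem_setOf_eq] at hj
      refine ⟨c - j, ?_, by ring⟩
      rw [hE, Finset.coe_filter]
      simp only [Set.mem_setOf_eq]
      have : c - (c - j) = j := by ring
      refine ⟨Finset.mem_univ _, ?_⟩
      rw [this]
      omega
  have hsplit : (S2 N c).card = E.card + Fx.card := by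
    have hdisj : Disjoint E Fx := by
      rw [Finset.disjoint_left]
      intro i hi hj
      rw [hE, Finset.mem_filter] at hi
      rw [hFx, Finset.mem_filter] at hj
      have := congrArg Fin.val hj.2
      omega
    rw [← Finset.card_union_of_disjoint hdisj]
    congr 1
    ext i
    simp only [S2, hE, hFx, Finset.mem_union, Finset.mem_filter, Finset.mem_univ, true_and,
      Fin.ext_iff]
    omega
  have hfx : Fx.card ≤ 2 := by rw [hFx]; exact fx_card c
  omega

lemma card_fix2 (k : ℕ) : (Fix2 N k).card ≤ 2 ^ ((N+1)/2 + 1) := by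
  classical
  set c := Fin.rev ((k : ℕ) : Fin (N+1)) with hc
  set S := S2 N c with hS
  have hdet : ∀ a ∈ Fix2 N k, ∀ b ∈ Fix2 N k,
      ((fun (a : Fin (N+1) → Bool) (j : {x // x ∈ S}) => a j.val) a
        = (fun (a : Fin (N+1) → Bool) (j : {x // x ∈ S}) => a j.val) b) → a = b := by
    intro a ha b hb hab
    rw [Fix2, Finset.mem_filter] at ha hb
    have ca := fix2_cond ha.2
    have cb := fix2_cond hb.2
    funext i
    by_cases hi : i.val ≤ (c - i).val
    · have hiS : i ∈ S := by rw [hS, S2, Finset.mem_filter]; exact ⟨Finset.mem_univ _, hi⟩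
      exact congrFun hab ⟨i, hiS⟩
    · push_neg at hi
      set j := c - i with hj
      have hji : c - j = i := by rw [hj]; ring
      have hjS : j ∈ S := by
        rw [hS, S2, Finset.mem_filter]
        refine ⟨Finset.mem_univ _, ?_⟩
        rw [hji]
        omega
      have h1 : a i = !(a j) := by rw [← hji]; exact ca j
      have h2 : b i = !(b j) := by rw [← hji]; exact cb j
      have h3 : a j = b j := congrFun hab ⟨j, hjS⟩
      rw [h1, h2, h3]
  have hcard : (Fix2 N k).card ≤ (Finset.univ : Finset ({x // x ∈ S} → Bool)).card := by
    apply Finset.card_le_card_of_injOn (fun a (j : {x // x ∈ S}) => a j.val)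
    · intro a _; exact Finset.mem_univ _
    · intro a ha b hb hab
      exact hdet a ha b hb hab
  have hS2 : 2 * S.card ≤ N + 3 := card_S2 c
  calc (Fix2 N k).card ≤ (Finset.univ : Finset ({x // x ∈ S} → Bool)).card := hcard
    _ = 2 ^ S.card := by simp [Fintype.card_coe]
    _ ≤ 2 ^ ((N+1)/2 + 1) := Nat.pow_le_pow_right (by norm_num) (by omega)

lemma main_count :
    2 ^ (N+1) ≤ Set.ncard {a : Fin (N+1) → Bool | Set.ncard {b | wordRel (N+1) a b} = 2*(N+1)}
      + (N+1) * 2 ^ ((N+1)/2 + 2) := by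
  classical
  set GSet := {a : Fin (N+1) → Bool | Set.ncard {b | wordRel (N+1) a b} = 2*(N+1)} with hGSet
  set GoodF := Finset.univ.filter (fun a : Fin (N+1) → Bool => Good a) with hGoodF
  set BadF := Finset.univ.filter (fun a : Fin (N+1) → Bool => ¬ Good a) with hBadF
  have hpart : GoodF.card + BadF.card = 2 ^ (N+1) := by
    rw [hGoodF, hBadF, Finset.card_filter_add_card_filter_not]
    simp
  have hGoodSub : GoodF ⊆ GSet.toFinset := by
    intro a ha
    rw [hGoodF, Finset.mem_filter] at ha
    rw [Set.mem_toFinset]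
    exact good_orbit_card ha.2
  have hGood_le : GoodF.card ≤ GSet.ncard := by
    rw [Set.ncard_eq_toFinset_card']
    exact Finset.card_le_card hGoodSub
  have hBadSub : BadF ⊆ ((Finset.Ioo 0 (N+1)).biUnion (Fix1 N))
      ∪ ((Finset.range (N+1)).biUnion (Fix2 N)) := by
    intro a ha
    rw [hBadF, Finset.mem_filter] at ha
    have hng := ha.2
    rw [Good, not_and_or] at hng
    rcases hng with h | h
    · push_neg at h
      obtain ⟨k, hk0, hk1, hk2⟩ := h
      apply Finset.mem_union_left
      rw [Finset.mem_biUnion]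
      exact ⟨k, Finset.mem_Ioo.mpr ⟨hk0, hk1⟩, by rw [Fix1, Finset.mem_filter]; exact ⟨Finset.mem_univ _, hk2⟩⟩
    · push_neg at h
      obtain ⟨k, hk1, hk2⟩ := h
      apply Finset.mem_union_right
      rw [Finset.mem_biUnion]
      exact ⟨k, Finset.mem_range.mpr hk1, by rw [Fix2, Finset.mem_filter]; exact ⟨Finset.mem_univ _, hk2⟩⟩
  have hBad_le : BadF.card ≤ (N+1) * 2 ^ ((N+1)/2 + 2) := by
    have h1 : BadF.card ≤ ((Finset.Ioo 0 (N+1)).biUnion (Fix1 N)).card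
        + ((Finset.range (N+1)).biUnion (Fix2 N)).card :=
      (Finset.card_le_card hBadSub).trans (Finset.card_union_le _ _)
    have h2 : ((Finset.Ioo 0 (N+1)).biUnion (Fix1 N)).card ≤ N * 2 ^ ((N+1)/2) := by
      calc _ ≤ ∑ k ∈ Finset.Ioo 0 (N+1), (Fix1 N k).card := Finset.card_biUnion_le
        _ ≤ ∑ _k ∈ Finset.Ioo 0 (N+1), 2 ^ ((N+1)/2) := by
            apply Finset.sum_le_sum
            intro k hk
            rw [Finset.mem_Ioo] at hk
            exact card_fix1 hk.1 hk.2
        _ = N * 2 ^ ((N+1)/2) := by simp [Nat.card_Ioo]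
    have h3 : ((Finset.range (N+1)).biUnion (Fix2 N)).card ≤ (N+1) * 2 ^ ((N+1)/2 + 1) := by
      calc _ ≤ ∑ k ∈ Finset.range (N+1), (Fix2 N k).card := Finset.card_biUnion_le
        _ ≤ ∑ _k ∈ Finset.range (N+1), 2 ^ ((N+1)/2 + 1) := by
            apply Finset.sum_le_sum
            intro k _
            exact card_fix2 k
        _ = (N+1) * 2 ^ ((N+1)/2 + 1) := by simp
    have harith : N * 2 ^ ((N+1)/2) + (N+1) * 2 ^ ((N+1)/2 + 1) ≤ (N+1) * 2 ^ ((N+1)/2 + 2) := by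
      have hP : 2 ^ ((N+1)/2 + 1) = 2 ^ ((N+1)/2) * 2 := pow_succ _ _
      have hP2 : 2 ^ ((N+1)/2 + 2) = 2 ^ ((N+1)/2) * 4 := by
        rw [pow_add]; norm_num
      rw [hP, hP2]
      nlinarith [Nat.zero_le (2 ^ ((N+1)/2)), Nat.zero_le N]
    omega
  omega

lemma upper_count :
    Set.ncard {a : Fin (N+1) → Bool | Set.ncard {b | wordRel (N+1) a b} = 2*(N+1)}
      ≤ 2 ^ (N+1) := by
  classical
  rw [Set.ncard_eq_toFinset_card']
  calc _ ≤ (Finset.univ : Finset (Fin (N+1) → Bool)).card := Finset.card_le_univ _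
    _ = 2 ^ (N+1) := by simp

open Filter

lemma pow_half_le : ∀ n : ℕ, (2:ℝ) ^ (n/2) ≤ (Real.sqrt 2) ^ n := by
  intro n
  have hs : (0:ℝ) ≤ Real.sqrt 2 := Real.sqrt_nonneg 2
  have hsq : (Real.sqrt 2) ^ 2 = 2 := Real.sq_sqrt (by norm_num)
  have h1 : ((2:ℝ) ^ (n/2)) ^ 2 ≤ ((Real.sqrt 2) ^ n) ^ 2 := by
    have hR : ((Real.sqrt 2) ^ n) ^ 2 = 2 ^ n := by
      rw [← pow_mul, mul_comm, pow_mul, hsq]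
    have hL : ((2:ℝ) ^ (n/2)) ^ 2 = 2 ^ (n/2 * 2) := (pow_mul 2 (n/2) 2).symm
    rw [hL, hR]
    apply pow_le_pow_right₀ (by norm_num)
    omega
  have h2 : (0:ℝ) ≤ (2:ℝ) ^ (n/2) := by positivity
  have h3 : (0:ℝ) ≤ (Real.sqrt 2) ^ n := by positivity
  nlinarith

lemma term_tendsto :
    Tendsto (fun n : ℕ => ((n : ℝ) * 2 ^ (n/2 + 2)) / 2 ^ n) atTop (nhds 0) := by
  have hs : (0:ℝ) ≤ Real.sqrt 2 := Real.sqrt_nonneg 2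
  have hsq : (Real.sqrt 2) ^ 2 = 2 := Real.sq_sqrt (by norm_num)
  have hslt : Real.sqrt 2 < 2 := by nlinarith
  have hr : |Real.sqrt 2 / 2| < 1 := by
    rw [abs_of_nonneg (by positivity)]
    linarith
  have hmain : Tendsto (fun n : ℕ => 4 * ((n:ℝ) ^ 1 * (Real.sqrt 2 / 2) ^ n)) atTop (nhds 0) := by
    have := (tendsto_pow_const_mul_const_pow_of_abs_lt_one 1 hr).const_mul (4:ℝ)
    simpa using this
  apply tendsto_of_tendsto_of_tendsto_of_le_of_le' tendsto_const_nhds hmain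
  · apply Eventually.of_forall
    intro n
    positivity
  · apply Eventually.of_forall
    intro n
    have h2n : (0:ℝ) < 2 ^ n := by positivity
    have hb : ((n : ℝ) * 2 ^ (n/2 + 2)) ≤ (n:ℝ) * (4 * (Real.sqrt 2) ^ n) := by
      have : (2:ℝ) ^ (n/2 + 2) = 4 * 2 ^ (n/2) := by rw [pow_add]; ring
      rw [this]
      have := pow_half_le n
      nlinarith [Nat.cast_nonneg (α := ℝ) n, pow_half_le n, pow_nonneg (show (0:ℝ) ≤ 2 by norm_num) (n/2)]
    have heq : 4 * ((n:ℝ) ^ 1 * (Real.sqrt 2 / 2) ^ n) = ((n:ℝ) * (4 * (Real.sqrt 2) ^ n)) / 2 ^ n := by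
      rw [div_pow]; ring
    rw [heq]
    exact div_le_div_of_nonneg_right hb (le_of_lt h2n)

/-- the proportion of binary words of length `n` whose equivalence
class (orbit) under the dihedral action generated by `ro` and `ve` has size
exactly `2n` tends to `1` as `n → ∞`. -/
theorem proportion_full_orbit_tendsto_one :
    Tendsto
      (fun n =>
        (Set.ncard {a : Fin n → Bool | Set.ncard {b | wordRel n a b} = 2 * n} : ℝ) / 2 ^ n)
      atTop (nhds 1) := by
  have hg : Tendsto (fun n : ℕ => 1 - ((n : ℝ) * 2 ^ (n/2 + 2)) / 2 ^ n) atTop (nhds 1) := by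
    have := term_tendsto.const_sub (1:ℝ)
    simpa using this
  apply tendsto_of_tendsto_of_tendsto_of_le_of_le' hg tendsto_const_nhds
  · filter_upwards [eventually_ge_atTop 1] with n hn
    obtain ⟨M, rfl⟩ := Nat.exists_eq_add_of_le hn
    set n := 1 + M with hn'
    have hn1 : n = M + 1 := by omega
    rw [hn1]
    have hmc := main_count (N := M)
    have h2n : (0:ℝ) < 2 ^ (M+1) := by positivity
    rw [sub_le_iff_le_add, ← add_div, le_div_iff₀ h2n, one_mul]
    exact_mod_cast hmc
  · filter_upwards [eventually_ge_atTop 1] with n hn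
    obtain ⟨M, rfl⟩ := Nat.exists_eq_add_of_le hn
    have hn1 : 1 + M = M + 1 := by omega
    rw [hn1]
    have huc := upper_count (N := M)
    have h2n : (0:ℝ) < 2 ^ (M+1) := by positivity
    rw [div_le_one h2n]
    calc (Set.ncard {a : Fin (M+1) → Bool | Set.ncard {b | wordRel (M+1) a b} = 2*(M+1)} : ℝ)
        ≤ ((2:ℕ) ^ (M+1) : ℝ) := by exact_mod_cast huc
      _ = 2 ^ (M+1) := by push_cast; ring
end

section
/- The proportion of binary words a of length n such that ve(a) ≡ a (where ≡ is the relation generated by cyclic shift and ve = reversal-plus-negation), equivalently such that the negation of a lies in the orbit of a, tends to 0 as n → ∞. -/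
variable {m : ℕ}

lemma rot_eq (i : ZMod (m+1)) : finRotate (m+1) i = (i + 1 : ZMod (m+1)) :=
  finRotate_succ_apply i

lemma rev_eq_s16 (i : ZMod (m+1)) : Fin.rev i = (-1 - i : ZMod (m+1)) := by
  have hv : ZMod.val i ≤ m := by have := ZMod.val_lt i; omega
  have h2 : Fin.rev i = (((m - ZMod.val i : ℕ) : ZMod (m+1)) : ZMod (m+1)) :=
    ZMod.val_injective (m+1) (by
      rw [ZMod.val_cast_of_lt (by omega)]
      show m + 1 - (ZMod.val i + 1) = _
      omega)
  have hm : ((m : ℕ) : ZMod (m+1)) = -1 := by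
    have := ZMod.natCast_self (m+1)
    push_cast at this
    linear_combination this
  rw [h2, Nat.cast_sub hv, hm, ZMod.natCast_val, ZMod.cast_id]

lemma rot_symm_eq (i : ZMod (m+1)) : (finRotate (m+1)).symm i = (i - 1 : ZMod (m+1)) := by
  have h1 : finRotate (m+1) (i - 1 : ZMod (m+1)) = i := by rw [rot_eq]; exact sub_add_cancel i 1
  exact (Equiv.symm_apply_eq (finRotate (m+1))).mpr h1.symm

lemma ro_apply (a : ZMod (m+1) → Bool) (i : ZMod (m+1)) : roE (m+1) a i = a (i+1) := by
  show a (finRotate (m+1) i) = a (i+1)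
  rw [rot_eq]

lemma ve_apply (a : ZMod (m+1) → Bool) (i : ZMod (m+1)) : veE (m+1) a i = !a (-1-i) := by
  show (!a (Fin.rev i)) = (!a (-1-i))
  rw [rev_eq_s16]

lemma ro_inv_apply (a : ZMod (m+1) → Bool) (i : ZMod (m+1)) :
    (roE (m+1))⁻¹ a i = a (i-1) := by
  show a ((finRotate (m+1)).symm i) = a (i-1)
  rw [rot_symm_eq]

lemma ve_sq : veE (m+1) * veE (m+1) = 1 := by
  ext a i
  show veE (m+1) (veE (m+1) a) i = a i
  erw [ve_apply, ve_apply, Bool.not_not]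
  congr 1
  exact (by intro x; ring : ∀ x : ZMod (m+1), -1 - (-1 - x) = x) i

lemma conj_rel : veE (m+1) * roE (m+1) * (veE (m+1))⁻¹ = (roE (m+1))⁻¹ := by
  have hinv : (veE (m+1))⁻¹ = veE (m+1) := by
    rw [inv_eq_iff_mul_eq_one, ve_sq]
  rw [hinv]
  ext a i
  show veE (m+1) (roE (m+1) (veE (m+1) a)) i = (roE (m+1))⁻¹ a i
  erw [ve_apply, ro_apply, ve_apply, Bool.not_not, ro_inv_apply]
  congr 1
  exact (by intro x; ring : ∀ x : ZMod (m+1), -1 - (-1 - x + 1) = x - 1) i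

lemma veconj_zpow (z : ℤ) : veE (m+1) * (roE (m+1))^z = (roE (m+1))^(-z) * veE (m+1) := by
  have h : (MulAut.conj (veE (m+1))) ((roE (m+1))^z) = (roE (m+1))^(-z) := by
    rw [map_zpow]
    have : (MulAut.conj (veE (m+1))) (roE (m+1)) = (roE (m+1))⁻¹ := conj_rel
    rw [this, ← zpow_neg_one, ← zpow_mul]
    ring_nf
  have h2 : veE (m+1) * (roE (m+1))^z * (veE (m+1))⁻¹ = (roE (m+1))^(-z) := h
  rw [← h2]
  group

lemma classify {g : Equiv.Perm (Fin (m+1) → Bool)}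
    (hg : g ∈ Subgroup.closure ({roE (m+1), veE (m+1)} : Set (Equiv.Perm (Fin (m+1) → Bool)))) :
    ∃ z : ℤ, g = (roE (m+1))^z ∨ g = (roE (m+1))^z * veE (m+1) := by
  induction hg using Subgroup.closure_induction with
  | mem x hx =>
    rcases hx with h | h
    · exact ⟨1, Or.inl (by rw [h, zpow_one])⟩
    · exact ⟨0, Or.inr (by rw [h, zpow_zero, one_mul])⟩
  | one => exact ⟨0, Or.inl (by rw [zpow_zero])⟩
  | mul x y hx hy ihx ihy =>
    obtain ⟨zx, hx'⟩ := ihx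
    obtain ⟨zy, hy'⟩ := ihy
    rcases hx' with h1 | h1 <;> rcases hy' with h2 | h2
    · exact ⟨zx + zy, Or.inl (by rw [h1, h2, zpow_add])⟩
    · exact ⟨zx + zy, Or.inr (by rw [h1, h2, zpow_add]; group)⟩
    · refine ⟨zx - zy, Or.inr ?_⟩
      rw [h1, h2, mul_assoc, veconj_zpow, ← mul_assoc, ← zpow_add]
      ring_nf
    · refine ⟨zx - zy, Or.inl ?_⟩
      rw [h1, h2, mul_assoc, ← mul_assoc (veE (m+1)) ((roE (m+1)) ^ zy), veconj_zpow,
        mul_assoc ((roE (m+1)) ^ (-zy)), ve_sq, mul_one, ← zpow_add]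
      ring_nf
  | inv x hx ihx =>
    obtain ⟨zx, hx'⟩ := ihx
    rcases hx' with h | h
    · exact ⟨-zx, Or.inl (by rw [h, ← zpow_neg])⟩
    · refine ⟨zx, Or.inr ?_⟩
      have hinv : (veE (m+1))⁻¹ = veE (m+1) := by rw [inv_eq_iff_mul_eq_one, ve_sq]
      rw [h, mul_inv_rev, hinv, ← zpow_neg, veconj_zpow, neg_neg]

lemma ro_zpow_apply (z : ℤ) : ∀ (a : ZMod (m+1) → Bool) (i : ZMod (m+1)),
    ((roE (m+1))^z) a i = a (i + (z : ZMod (m+1))) := by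
  induction z using Int.induction_on with
  | zero => simp; intro a i; rfl
  | succ k ih =>
    intro a i
    have h : ((roE (m+1))^((k:ℤ)+1)) a = ((roE (m+1))^(k:ℤ)) (roE (m+1) a) := by
      rw [zpow_add_one]; rfl
    rw [h, ih (roE (m+1) a), ro_apply]
    congr 1
    push_cast
    ring
  | pred k ih =>
    intro a i
    have h : ((roE (m+1))^(-(k:ℤ)-1)) a = ((roE (m+1))^(-(k:ℤ))) ((roE (m+1))⁻¹ a) := by
      rw [zpow_sub_one]; rfl
    rw [h, ih ((roE (m+1))⁻¹ a), ro_inv_apply]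
    congr 1
    push_cast
    ring

lemma ncard_le_pow {α : Type*} [Fintype α] [DecidableEq α] (S : Set (α → Bool)) (T : Finset α)
    (h : ∀ a ∈ S, ∀ b ∈ S, (∀ i ∈ T, a i = b i) → a = b) : S.ncard ≤ 2 ^ T.card := by
  classical
  have hinj : Set.InjOn (fun a => (fun i : T => a i.1)) S := by
    intro a ha b hb hab
    exact h a ha b hb (fun i hi => congrFun hab ⟨i, hi⟩)
  calc S.ncard = ((fun (a : α → Bool) => (fun i : T => a i.1)) '' S).ncard :=
        (Set.ncard_image_of_injOn hinj).symm
    _ ≤ (Set.univ : Set (T → Bool)).ncard := Set.ncard_le_ncard (Set.subset_univ _) Set.finite_univ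
    _ = Fintype.card (T → Bool) := by rw [Set.ncard_univ, Nat.card_eq_fintype_card]
    _ = 2 ^ T.card := by
        rw [Fintype.card_fun]
        simp

lemma two_torsion (d : ZMod (m+1)) (hd : d + d = 0) :
    d = 0 ∨ d = (((m+1)/2 : ℕ) : ZMod (m+1)) := by
  have h1 : ((2 * d.val : ℕ) : ZMod (m+1)) = 0 := by
    push_cast
    rw [ZMod.natCast_val, ZMod.cast_id]
    linear_combination hd
  have h2 : (m+1) ∣ 2 * d.val := by
    rwa [ZMod.natCast_eq_zero_iff] at h1
  have h3 : d.val < m + 1 := ZMod.val_lt d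
  have h4 : 2 * d.val = 0 ∨ 2 * d.val = m + 1 := by
    rcases Nat.lt_or_ge (2 * d.val) (m+1) with h | h
    · left
      exact Nat.eq_zero_of_dvd_of_lt h2 h
    · right
      have h5 : (m+1) ∣ (2 * d.val - (m+1)) := Nat.dvd_sub h2 dvd_rfl
      have h6 : 2 * d.val - (m+1) < m + 1 := by omega
      have := Nat.eq_zero_of_dvd_of_lt h5 h6
      omega
  rcases h4 with h | h
  · left
    rw [← ZMod.val_eq_zero]
    omega
  · right
    apply ZMod.val_injective
    rw [ZMod.val_cast_of_lt (by omega)]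
    omega

lemma countB (c : ZMod (m+1)) :
    Set.ncard {a : ZMod (m+1) → Bool | ∀ i, a (c - i) = a i} ≤ 2 ^ ((m+1)/2 + 1) := by
  classical
  set T : Finset (ZMod (m+1)) :=
    Finset.univ.filter (fun i => i.val ≤ (c - i).val) with hT
  have hdet : ∀ a ∈ {a : ZMod (m+1) → Bool | ∀ i, a (c - i) = a i},
      ∀ b ∈ {a : ZMod (m+1) → Bool | ∀ i, a (c - i) = a i},
      (∀ i ∈ T, a i = b i) → a = b := by
    intro a ha b hb hab
    funext i
    by_cases hi : i.val ≤ (c - i).val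
    · exact hab i (by simp [hT, hi])
    · have h1 : (c - i) ∈ T := by
        simp only [hT, Finset.mem_filter, Finset.mem_univ, true_and]
        rw [sub_sub_cancel]
        omega
      have h2 : a i = a (c - i) := (by rw [← ha i]) -- a (c - i) = a i
      have h3 : b i = b (c - i) := (by rw [← hb i])
      rw [h2, h3]
      exact hab _ h1
  refine le_trans (ncard_le_pow _ T hdet) (Nat.pow_le_pow_right (by norm_num) ?_)
  -- card bound
  set Tlt : Finset (ZMod (m+1)) := Finset.univ.filter (fun i => i.val < (c - i).val) with hTlt
  set P : Finset (ZMod (m+1)) := Finset.univ.filter (fun i => (c - i).val < i.val) with hP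
  set F : Finset (ZMod (m+1)) := Finset.univ.filter (fun i => i.val = (c - i).val) with hF
  have hTP : T.card + P.card = m + 1 := by
    have := Finset.card_filter_add_card_filter_not
      (s := (Finset.univ : Finset (ZMod (m+1)))) (p := fun i => i.val ≤ (c - i).val)
    rw [hT, hP]
    convert this using 3
    · ext i
      simp [not_le]
    · simp [ZMod.card]
  have hTsplit : T.card = Tlt.card + F.card := by
    rw [hT, hTlt, hF]
    rw [← Finset.card_union_of_disjoint]
    · congr 1
      ext i
      simp only [Finset.mem_filter, Finset.mem_univ, true_and, Finset.mem_union]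
      omega
    · rw [Finset.disjoint_filter]
      intro i _ h1
      omega
  have hbij : Tlt.card = P.card := by
    apply Finset.card_bij (fun i _ => c - i)
    · intro i hi
      simp only [hTlt, Finset.mem_filter, Finset.mem_univ, true_and] at hi
      simp only [hP, Finset.mem_filter, Finset.mem_univ, true_and, sub_sub_cancel]
      exact hi
    · intro i _ j _ hij
      exact sub_right_injective hij
    · intro j hj
      simp only [hP, Finset.mem_filter, Finset.mem_univ, true_and] at hj
      refine ⟨c - j, ?_, by rw [sub_sub_cancel]⟩
      simp only [hTlt, Finset.mem_filter, Finset.mem_univ, true_and, sub_sub_cancel]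
      exact hj
  have hFcard : F.card ≤ 2 := by
    rcases Finset.eq_empty_or_nonempty F with h | ⟨x₀, hx₀⟩
    · simp [h]
    · have hx₀' : x₀.val = (c - x₀).val := by
        simpa [hF] using hx₀
      have hsub : F ⊆ {x₀, x₀ + (((m+1)/2 : ℕ) : ZMod (m+1))} := by
        intro y hy
        have hy' : y.val = (c - y).val := by simpa [hF] using hy
        have e1 : x₀ = c - x₀ := ZMod.val_injective _ hx₀'
        have e2 : y = c - y := ZMod.val_injective _ hy'
        have hd : (y - x₀) + (y - x₀) = 0 := by linear_combination e2 - e1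
        rcases two_torsion _ hd with h | h
        · simp only [Finset.mem_insert, Finset.mem_singleton]
          left
          linear_combination h
        · simp only [Finset.mem_insert, Finset.mem_singleton]
          right
          linear_combination h
      calc F.card ≤ ({x₀, x₀ + (((m+1)/2 : ℕ) : ZMod (m+1))} : Finset _).card :=
            Finset.card_le_card hsub
        _ ≤ 2 := by
            apply le_trans (Finset.card_insert_le _ _)
            simp
  omega

lemma bodd_succ (z : ℤ) : Int.bodd (z + 1) = !Int.bodd z := by
  rw [Int.bodd_add]
  simp [Bool.xor_true]

lemma bodd_pred (z : ℤ) : Int.bodd (z - 1) = !Int.bodd z := by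
  have := bodd_succ (z - 1)
  rw [sub_add_cancel] at this
  rw [this, Bool.not_not]

lemma step_lemma {a : ZMod (m+1) → Bool} (ha : ∀ i, a (i + k) = !a i) (z : ℤ)
    (i : ZMod (m+1)) : a (i + z • k) = xor (Int.bodd z) (a i) := by
  induction z using Int.induction_on with
  | zero => simp
  | succ t ih =>
    have h1 : i + ((t:ℤ)+1) • k = (i + (t:ℤ) • k) + k := by
      rw [add_smul, one_smul]
      ring
    rw [h1, ha, ih, bodd_succ]
    cases Int.bodd (t:ℤ) <;> cases a i <;> simp
  | pred t ih =>
    have h1 : i + (-(t:ℤ)-1) • k = (i + (-(t:ℤ)) • k) - k := by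
      rw [sub_smul, one_smul]
      ring
    have h2 : ∀ j, a (j - k) = !a j := by
      intro j
      have := ha (j - k)
      rw [sub_add_cancel] at this
      rw [this, Bool.not_not]
    rw [h1, h2, ih, bodd_pred]
    cases Int.bodd (-(t:ℤ)) <;> cases a i <;> simp

lemma countA (k : ZMod (m+1)) :
    Set.ncard {a : ZMod (m+1) → Bool | ∀ i, a (i + k) = !a i} ≤ 2 ^ ((m+1)/2) := by
  classical
  set S := {a : ZMod (m+1) → Bool | ∀ i, a (i + k) = !a i} with hS
  rcases S.eq_empty_or_nonempty with h | ⟨a₀, ha₀⟩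
  · simp [h]
  set d := (m+1).gcd k.val with hd
  have hd0 : 0 < d := Nat.gcd_pos_of_pos_left _ (by omega)
  have hddvd : d ∣ (m+1) := Nat.gcd_dvd_left _ _
  -- order of k
  have hkv : ((k.val : ℕ) : ZMod (m+1)) = k := ZMod.natCast_rightInverse k
  have hL : addOrderOf k = (m+1) / d := by
    rw [← hkv, ZMod.addOrderOf_coe _ (by omega)]
  have hLk : (addOrderOf k) • k = 0 := addOrderOf_nsmul_eq_zero k
  have hLeven : Int.bodd (addOrderOf k : ℤ) = false := by
    have h1 := step_lemma ha₀ (addOrderOf k : ℤ) 0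
    rw [natCast_zsmul, hLk, add_zero] at h1
    cases hb : Int.bodd (addOrderOf k : ℤ)
    · rfl
    · rw [hb] at h1
      cases h : a₀ 0 <;> rw [h] at h1 <;> simp at h1
  have hL2 : 2 ≤ (m+1)/d := by
    have h1 : 1 ≤ (m+1)/d := Nat.one_le_div_iff hd0 |>.mpr (Nat.le_of_dvd (by omega) hddvd)
    rcases Nat.lt_or_ge ((m+1)/d) 2 with h | h
    · exfalso
      have h2 : (m+1)/d = 1 := by omega
      rw [hL, h2] at hLeven
      simp [Int.bodd_coe] at hLeven
    · exact h
  have hdle : d ≤ (m+1)/2 := by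
    have := Nat.div_mul_cancel hddvd
    have h2 : 2 * d ≤ (m+1)/d * d := Nat.mul_le_mul_right d hL2
    omega
  -- Bezout
  obtain ⟨y, hy⟩ : ∃ y : ℤ, ((d : ℕ) : ZMod (m+1)) = y • k := by
    refine ⟨Nat.gcdB (m+1) k.val, ?_⟩
    have hb := Nat.gcd_eq_gcd_ab (m+1) k.val
    have : ((d : ℕ) : ZMod (m+1)) = (((m+1 : ℕ) : ℤ) * Nat.gcdA (m+1) k.val
        + ((k.val : ℕ) : ℤ) * Nat.gcdB (m+1) k.val : ℤ) := by
      rw [← hb]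
      push_cast
      ring
    rw [this]
    push_cast
    have hm0 : ((m : ZMod (m+1)) + 1) = 0 := by
      have := ZMod.natCast_self (m+1)
      push_cast at this
      exact this
    rw [zsmul_eq_mul, hkv]
    linear_combination ((Nat.gcdA (m+1) k.val : ℤ) : ZMod (m+1)) * hm0
  set T : Finset (ZMod (m+1)) := (Finset.range d).image (fun t : ℕ => (t : ZMod (m+1))) with hT
  have hTcard : T.card = d := by
    rw [hT, Finset.card_image_of_injOn, Finset.card_range]
    intro s hs t ht hst
    simp only [Finset.coe_range, Set.mem_Iio] at hs ht
    have h1 := ZMod.val_cast_of_lt (a := s) (n := m+1) (by omega)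
    have h2 := ZMod.val_cast_of_lt (a := t) (n := m+1) (by omega)
    rw [← h1, ← h2]
    exact congrArg ZMod.val hst
  have hdet : ∀ a ∈ S, ∀ b ∈ S, (∀ i ∈ T, a i = b i) → a = b := by
    intro a ha b hb hab
    funext i
    have hrep : i = ((i.val % d : ℕ) : ZMod (m+1)) + (((i.val / d : ℕ) : ℤ) * y) • k := by
      rw [mul_smul (α := ℤ), ← hy, natCast_zsmul, nsmul_eq_mul,
        ← Nat.cast_mul, ← Nat.cast_add, Nat.mod_add_div' i.val d,
        ZMod.natCast_val, ZMod.cast_id]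
    have hmem : ((i.val % d : ℕ) : ZMod (m+1)) ∈ T := by
      rw [hT]
      exact Finset.mem_image.mpr ⟨i.val % d, Finset.mem_range.mpr (Nat.mod_lt _ hd0), rfl⟩
    calc a i = a (((i.val % d : ℕ) : ZMod (m+1)) + (((i.val / d : ℕ) : ℤ) * y) • k) := by
          rw [← hrep]
      _ = xor (Int.bodd _) (a ((i.val % d : ℕ) : ZMod (m+1))) := step_lemma ha _ _
      _ = xor (Int.bodd _) (b ((i.val % d : ℕ) : ZMod (m+1))) := by rw [hab _ hmem]
      _ = b (((i.val % d : ℕ) : ZMod (m+1)) + (((i.val / d : ℕ) : ℤ) * y) • k) :=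
          (step_lemma hb _ _).symm
      _ = b i := by rw [← hrep]
  calc S.ncard ≤ 2 ^ T.card := ncard_le_pow S T hdet
    _ ≤ 2 ^ ((m+1)/2) := Nat.pow_le_pow_right (by norm_num) (by omega)


lemma ncard_biUnion_le {ι α : Type*} [DecidableEq ι] (t : Finset ι) (s : ι → Set α) :
    (⋃ i ∈ t, s i).ncard ≤ ∑ i ∈ t, (s i).ncard := by
  induction t using Finset.induction_on with
  | empty => simp
  | @insert a t ha ih =>
    rw [Finset.set_biUnion_insert, Finset.sum_insert ha]
    exact le_trans (Set.ncard_union_le _ _) (Nat.add_le_add_left ih _)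

lemma main_bound (m : ℕ) :
    Set.ncard {a : Fin (m+1) → Bool | wordRel (m+1) a (fun i => !(a i))}
      ≤ (m+1) * 2 ^ ((m+1)/2 + 2) := by
  classical
  set U : ZMod (m+1) → Set (ZMod (m+1) → Bool) := fun k =>
    ({a : ZMod (m+1) → Bool | ∀ i, a (i + k) = !a i} ∪
     {a : ZMod (m+1) → Bool | ∀ i, a (k - i) = a i}) with hU
  have hsub : {a : Fin (m+1) → Bool | wordRel (m+1) a (fun i => !(a i))} ⊆
      ⋃ k : ZMod (m+1), U k := by
    intro a ha
    obtain ⟨g, hg, hga⟩ := ha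
    obtain ⟨z, hz | hz⟩ := classify hg
    · refine Set.mem_iUnion.mpr ⟨(z : ZMod (m+1)), Or.inl ?_⟩
      intro i
      have h1 := congrFun hga i
      rw [hz] at h1
      rw [← ro_zpow_apply z a i]
      exact h1
    · refine Set.mem_iUnion.mpr ⟨(-1 - (z : ZMod (m+1)) : ZMod (m+1)), Or.inr ?_⟩
      intro i
      have h1 := congrFun hga i
      rw [hz] at h1
      have h2 : ((roE (m+1) ^ z) * veE (m+1)) a i = (veE (m+1) a) (i + (z : ZMod (m+1))) := by
        show ((roE (m+1) ^ z) (veE (m+1) a)) i = _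
        erw [ro_zpow_apply]
      erw [h2, ve_apply] at h1
      have h3 : (!a ((-1 - ((i : ZMod (m+1)) + (z : ZMod (m+1)))) : ZMod (m+1))) = !a i := h1
      have h4 : a ((-1 - ((i : ZMod (m+1)) + (z : ZMod (m+1)))) : ZMod (m+1)) = a i := by
        cases hcase : a i <;> rw [hcase] at h3 <;> simpa using h3
      have h5 : (-1 - (z : ZMod (m+1))) - (i : ZMod (m+1)) = -1 - ((i : ZMod (m+1)) + (z : ZMod (m+1))) := by ring
      rw [h5]
      exact h4
  have hfin : (⋃ k : ZMod (m+1), U k).Finite := Set.toFinite _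
  have h6 : (⋃ k : ZMod (m+1), U k) = ⋃ k ∈ (Finset.univ : Finset (ZMod (m+1))), U k := by
    simp
  calc Set.ncard {a : Fin (m+1) → Bool | wordRel (m+1) a (fun i => !(a i))}
      ≤ (⋃ k : ZMod (m+1), U k).ncard := Set.ncard_le_ncard hsub hfin
    _ = (⋃ k ∈ (Finset.univ : Finset (ZMod (m+1))), U k).ncard := by rw [h6]
    _ ≤ ∑ k ∈ (Finset.univ : Finset (ZMod (m+1))), (U k).ncard := ncard_biUnion_le _ _
    _ ≤ ∑ _k ∈ (Finset.univ : Finset (ZMod (m+1))), 2 ^ ((m+1)/2 + 2) := by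
        apply Finset.sum_le_sum
        intro k _
        have h7 := Set.ncard_union_le {a : ZMod (m+1) → Bool | ∀ i, a (i + k) = !a i}
          {a : ZMod (m+1) → Bool | ∀ i, a (k - i) = a i}
        have h8 := countA k
        have h9 := countB k
        have h10 : (2:ℕ) ^ ((m+1)/2 + 1) = 2 * 2 ^ ((m+1)/2) := by rw [pow_succ]; ring
        have h11 : (2:ℕ) ^ ((m+1)/2 + 2) = 4 * 2 ^ ((m+1)/2) := by
          rw [pow_add]; ring
        have h12 : (U k).ncard ≤ Set.ncard {a : ZMod (m+1) → Bool | ∀ i, a (i + k) = !a i}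
            + Set.ncard {a : ZMod (m+1) → Bool | ∀ i, a (k - i) = a i} := h7
        refine le_trans h12 (le_trans (add_le_add h8 h9) ?_)
        clear h12 h7 h6 hfin hsub hU U h8 h9
        rw [h10, h11]
        omega
    _ = (m+1) * 2 ^ ((m+1)/2 + 2) := by
        rw [Finset.sum_const, Finset.card_univ, ZMod.card]
        ring

open Filter

lemma sqrt2_pow_le (n : ℕ) : Real.sqrt 2 ^ n ≤ Real.sqrt 2 * 2 ^ (n / 2) := by
  have h1 : Real.sqrt 2 ^ 2 = 2 := Real.sq_sqrt (by norm_num)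
  have h2 : (1:ℝ) ≤ Real.sqrt 2 := by
    rw [show (1:ℝ) = Real.sqrt 1 by simp]
    exact Real.sqrt_le_sqrt (by norm_num)
  calc Real.sqrt 2 ^ n = Real.sqrt 2 ^ (2 * (n / 2) + n % 2) := by rw [Nat.div_add_mod]
    _ = (Real.sqrt 2 ^ 2) ^ (n / 2) * Real.sqrt 2 ^ (n % 2) := by rw [pow_add, pow_mul]
    _ = 2 ^ (n / 2) * Real.sqrt 2 ^ (n % 2) := by rw [h1]
    _ ≤ 2 ^ (n / 2) * Real.sqrt 2 := by
        gcongr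
        rcases Nat.mod_two_eq_zero_or_one n with h | h <;> rw [h] <;> simp [h2]
    _ = Real.sqrt 2 * 2 ^ (n / 2) := by ring

lemma real_bound (n : ℕ) :
    ((n:ℝ) * 2 ^ (n/2 + 2)) / 2 ^ n ≤ 4 * Real.sqrt 2 * (n * ((Real.sqrt 2)⁻¹) ^ n) := by
  have hs2 : (0:ℝ) < Real.sqrt 2 := Real.sqrt_pos.mpr (by norm_num)
  have hsp : (0:ℝ) < Real.sqrt 2 ^ n := pow_pos hs2 n
  have key : (2:ℝ) ^ (n/2 + 2) * Real.sqrt 2 ^ n ≤ 4 * Real.sqrt 2 * 2 ^ n := by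
    calc (2:ℝ) ^ (n/2 + 2) * Real.sqrt 2 ^ n
        ≤ (2:ℝ) ^ (n/2 + 2) * (Real.sqrt 2 * 2 ^ (n / 2)) := by
          gcongr
          exact sqrt2_pow_le n
      _ = 4 * Real.sqrt 2 * ((2:ℝ) ^ (n/2) * 2 ^ (n/2)) := by rw [pow_add]; ring
      _ = 4 * Real.sqrt 2 * (2:ℝ) ^ (n/2 + n/2) := by rw [pow_add]
      _ ≤ 4 * Real.sqrt 2 * (2:ℝ) ^ n := by
          gcongr
          · norm_num
          · omega
  calc ((n:ℝ) * 2 ^ (n/2 + 2)) / 2 ^ n = (n:ℝ) * ((2:ℝ) ^ (n/2 + 2) / 2 ^ n) := by ring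
    _ ≤ (n:ℝ) * (4 * Real.sqrt 2 / Real.sqrt 2 ^ n) := by
        refine mul_le_mul_of_nonneg_left ?_ (Nat.cast_nonneg n)
        rw [div_le_div_iff₀ (by positivity) hsp]
        exact key
    _ = 4 * Real.sqrt 2 * (n * ((Real.sqrt 2)⁻¹) ^ n) := by
        rw [inv_pow]
        ring

/-- the proportion of binary words `a` of length `n` whose negation
lies in the orbit of `a` under the group generated by `ro` and `ve` (equivalently,
`ve(a) ≡ a`) tends to `0` as `n → ∞`. -/
theorem proportion_neg_in_orbit_tendsto_zero :
    Tendsto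
      (fun n =>
        (Set.ncard {a : Fin n → Bool | wordRel n a (fun i => !(a i))} : ℝ) / 2 ^ n)
      atTop (nhds 0) := by
  have hs2 : (0:ℝ) < Real.sqrt 2 := Real.sqrt_pos.mpr (by norm_num)
  have h2 : (1:ℝ) < Real.sqrt 2 := by
    rw [show (1:ℝ) = Real.sqrt 1 by simp]
    exact Real.sqrt_lt_sqrt (by norm_num) (by norm_num)
  have hr0 : (0:ℝ) ≤ (Real.sqrt 2)⁻¹ := by positivity
  have hr1 : (Real.sqrt 2)⁻¹ < 1 := by
    rw [inv_lt_one_iff₀]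
    right
    exact h2
  have hlim : Tendsto (fun n : ℕ => 4 * Real.sqrt 2 * ((n:ℝ) * ((Real.sqrt 2)⁻¹) ^ n))
      atTop (nhds 0) := by
    have := (tendsto_self_mul_const_pow_of_lt_one hr0 hr1).const_mul (4 * Real.sqrt 2)
    simpa using this
  apply squeeze_zero' (g := fun n : ℕ => 4 * Real.sqrt 2 * ((n:ℝ) * ((Real.sqrt 2)⁻¹) ^ n))
  · filter_upwards with n
    positivity
  · filter_upwards [eventually_ge_atTop 1] with n hn
    obtain ⟨m, rfl⟩ : ∃ m, n = m + 1 := ⟨n - 1, by omega⟩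
    have hb := main_bound m
    have hb' : (Set.ncard {a : Fin (m+1) → Bool | wordRel (m+1) a (fun i => !(a i))} : ℝ)
        ≤ ((m+1 : ℕ) : ℝ) * 2 ^ ((m+1)/2 + 2) := by
      calc (Set.ncard {a : Fin (m+1) → Bool | wordRel (m+1) a (fun i => !(a i))} : ℝ)
          ≤ (((m+1) * 2 ^ ((m+1)/2 + 2) : ℕ) : ℝ) := Nat.cast_le.mpr hb
        _ = ((m+1 : ℕ) : ℝ) * 2 ^ ((m+1)/2 + 2) := by push_cast; ring
    calc (Set.ncard {a : Fin (m+1) → Bool | wordRel (m+1) a (fun i => !(a i))} : ℝ) / 2 ^ (m+1)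
        ≤ (((m+1:ℕ):ℝ) * 2 ^ ((m+1)/2 + 2)) / 2 ^ (m+1) := by
          gcongr
      _ ≤ 4 * Real.sqrt 2 * (((m+1:ℕ):ℝ) * ((Real.sqrt 2)⁻¹) ^ (m+1)) := real_bound (m+1)
      _ = 4 * Real.sqrt 2 * (((m+1:ℕ):ℝ) * ((Real.sqrt 2)⁻¹) ^ (m+1)) := rfl
  · exact hlim
end
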